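/- In the epidemic setting, let t ∈ ℝ with Ω_t nonempty and let τ > 0. Then #Ω_t · P_t(τ^σ_t = τ) = Σ_{ω' ∈ Ω_{t−τ}} n^τ(ω'); equivalently, if Ω_{t−τ} is nonempty, P_t(τ^σ_t = τ) = (#Ω_{t−τ}/#Ω_t) · E_{P_{t−τ}}(n^τ): the probability that the infector of an individual infected at t was infected at time t − τ equals the mean number of people infected at infectious age τ by individuals infected at t − τ, times #Ω_{t−τ}/#Ω_t. -/

import Mathlib

/-
Conditioning on `Ω_t` cancels the factor `#Ω_t`, so the claim reduces to a double count:
the individuals infected at `t` with generation time `τ` are exactly those whose infector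
lies in `Ω_{t-τ}`, and grouping them by infector gives, for each `ω' ∈ Ω_{t-τ}`, precisely
the `n^τ(ω')` people that `ω'` infected at infectious age `τ`.
-/

open Finset
open scoped Classical ENNReal NNReal

noncomputable section

variable {Ω : Type*} [Fintype Ω]

/-- Number of elements of `Ω` satisfying `E`, as a real number. -/
def cnt (E : Ω → Prop) : ℝ := ((Finset.univ.filter E).card : ℝ)

/-- The uniform (counting) probability of the event `E`. -/
def pr (E : Ω → Prop) : ℝ := cnt E / (Fintype.card Ω : ℝ)

/-- The conditional probability of the event `E` given the event `C`
(junk value `0` if `C` is empty). -/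
def prC (C E : Ω → Prop) : ℝ := cnt (fun ω => C ω ∧ E ω) / cnt C

/-- The expectation of `X` under the uniform probability measure. -/
def expec (X : Ω → ℝ) : ℝ := (∑ ω, X ω) / (Fintype.card Ω : ℝ)

/-- The conditional expectation of `X` given the event `C`, i.e. the average of `X`
over `C` (junk value `0` if `C` is empty). -/
def expecC (C : Ω → Prop) (X : Ω → ℝ) : ℝ :=
  (∑ ω ∈ Finset.univ.filter C, X ω) / cnt C

end

noncomputable section

variable {Ω : Type*} [Fintype Ω]

/-- `ninf tI σ τ ω` is the number of people infected by `ω` exactly at `ω`'s infectious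
age `τ`: the number of `ω' ∈ Ω_{>0}` with `σ ω' = ω` and generation time `τ^σ ω' = τ`. -/
def ninf (tI : Ω → ℝ) (σ : Ω → Ω) (τ : ℝ) (ω : Ω) : ℝ :=
  cnt (fun ω' => 0 < tI ω' ∧ σ ω' = ω ∧ tI ω' - tI (σ ω') = τ)

/-- The (finitely many) positive times `τ` such that `Ω_{t-τ}` is nonempty. -/
def genTimes (tI : Ω → ℝ) (t : ℝ) : Finset ℝ :=
  (Finset.univ.image (fun ω' => t - tI ω')).filter (fun τ => 0 < τ)

end

section Counting

variable {Ω : Type*} [Fintype Ω]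

theorem cnt_eq_zero_iff (C : Ω → Prop) : cnt C = 0 ↔ ∀ ω, ¬ C ω := by
  simp [cnt, Finset.filter_eq_empty_iff]

theorem cnt_mul_prC (C E : Ω → Prop) : cnt C * prC C E = cnt (fun ω => C ω ∧ E ω) := by
  by_cases hC : cnt C = 0
  · have hCE : cnt (fun ω => C ω ∧ E ω) = 0 :=
      (cnt_eq_zero_iff _).2 fun ω h => (cnt_eq_zero_iff C).1 hC ω h.1
    rw [hC, hCE, zero_mul]
  · exact mul_div_cancel₀ _ hC

theorem cnt_mul_expecC (C : Ω → Prop) (X : Ω → ℝ) :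
    cnt C * expecC C X = ∑ ω ∈ Finset.univ.filter C, X ω := by
  by_cases hC : cnt C = 0
  · have hempty : Finset.univ.filter C = ∅ :=
      Finset.filter_eq_empty_iff.2 fun ω _ => (cnt_eq_zero_iff C).1 hC ω
    rw [hC, zero_mul, hempty, Finset.sum_empty]
  · exact mul_div_cancel₀ _ hC

end Counting

theorem sum_ninf_eq_cnt {Ω : Type*} [Fintype Ω] (tI : Ω → ℝ) (σ : Ω → Ω) (t τ : ℝ) :
    ∑ ω' ∈ Finset.univ.filter (fun ω' => tI ω' = t - τ), ninf tI σ τ ω' =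
      cnt (fun ω => tI ω = t ∧ 0 < tI ω ∧ tI ω - tI (σ ω) = τ) := by
  set S := Finset.univ.filter (fun ω => tI ω = t ∧ 0 < tI ω ∧ tI ω - tI (σ ω) = τ)
  have hmaps : ∀ ω ∈ S, σ ω ∈ Finset.univ.filter (fun ω' => tI ω' = t - τ) := by
    intro ω hω
    simp only [S, Finset.mem_filter, Finset.mem_univ, true_and] at hω ⊢
    linarith [hω.2.2]
  have hfiber : ∀ ω' ∈ Finset.univ.filter (fun ω' => tI ω' = t - τ),
      ninf tI σ τ ω' = (S.filter (fun ω => σ ω = ω')).card := by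
    intro ω' hω'
    simp only [Finset.mem_filter, Finset.mem_univ, true_and] at hω'
    simp only [ninf, cnt, S, Finset.filter_filter]
    congr 3
    ext ω
    constructor
    · rintro ⟨hpos, rfl, hgen⟩
      exact ⟨⟨by linarith, hpos, hgen⟩, rfl⟩
    · rintro ⟨⟨-, hpos, hgen⟩, rfl⟩
      exact ⟨hpos, rfl, hgen⟩
  rw [Finset.sum_congr rfl hfiber, cnt]
  -- `convert` bridges the decidability instances of `S` and of the filter inside `cnt`.
  convert (congrArg ((↑) : ℕ → ℝ) (Finset.card_eq_sum_card_fiberwise hmaps)).symm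
  push_cast
  rfl

theorem statement_9_general {Ω : Type*} [Fintype Ω] (tI : Ω → ℝ) (σ : Ω → Ω)
    (t : ℝ)
    (τ : ℝ) :
    cnt (fun ω => tI ω = t) *
        prC (fun ω => tI ω = t) (fun ω => 0 < tI ω ∧ tI ω - tI (σ ω) = τ) =
      ∑ ω' ∈ Finset.univ.filter (fun ω' => tI ω' = t - τ), ninf tI σ τ ω'
    ∧
    ((Finset.univ.filter (fun ω' => tI ω' = t - τ)).Nonempty →
      prC (fun ω => tI ω = t) (fun ω => 0 < tI ω ∧ tI ω - tI (σ ω) = τ) =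
        (cnt (fun ω => tI ω = t - τ) / cnt (fun ω => tI ω = t)) *
          expecC (fun ω => tI ω = t - τ) (ninf tI σ τ)) := by
  have hcount :=
    (cnt_mul_prC (fun ω => tI ω = t) (fun ω => 0 < tI ω ∧ tI ω - tI (σ ω) = τ)).trans
      (sum_ninf_eq_cnt tI σ t τ).symm
  refine ⟨hcount, fun _ => ?_⟩
  rw [div_mul_eq_mul_div, cnt_mul_expecC, ← hcount, cnt_mul_prC]
  rfl

/-- distribution of the generation time.  Epidemic setting; `τ > 0`:
`#Ω_t · P_t(τ^σ_t = τ) = Σ_{ω' ∈ Ω_{t−τ}} n^τ(ω')`, and equivalently, if `Ω_{t−τ}` is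
nonempty, `P_t(τ^σ_t = τ) = (#Ω_{t−τ}/#Ω_t) · E_{P_{t−τ}}(n^τ)`. -/
theorem statement_9 {Ω : Type*} [Fintype Ω] (tI : Ω → ℝ) (σ : Ω → Ω)
    (hσ : ∀ ω, 0 < tI ω → tI (σ ω) < tI ω) (t : ℝ)
    (hne : (Finset.univ.filter (fun ω => tI ω = t)).Nonempty)
    (τ : ℝ) (hτ : 0 < τ) :
    cnt (fun ω => tI ω = t) *
        prC (fun ω => tI ω = t) (fun ω => 0 < tI ω ∧ tI ω - tI (σ ω) = τ) =
      ∑ ω' ∈ Finset.univ.filter (fun ω' => tI ω' = t - τ), ninf tI σ τ ω'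
    ∧
    ((Finset.univ.filter (fun ω' => tI ω' = t - τ)).Nonempty →
      prC (fun ω => tI ω = t) (fun ω => 0 < tI ω ∧ tI ω - tI (σ ω) = τ) =
        (cnt (fun ω => tI ω = t - τ) / cnt (fun ω => tI ω = t)) *
          expecC (fun ω => tI ω = t - τ) (ninf tI σ τ)) :=
  statement_9_general tI σ t τ
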